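/- arXiv:1711.05508 — 3 statements merged into one kernel-verified Lean document; each statement's English description precedes it below -/
import Mathlib

section
/- Let ⟨K,B,P,N⟩_R be a DPI. Then there exists a diagnosis w.r.t. the DPI if and only if B ∪ U_P satisfies every r ∈ R and B ∪ U_P ⊭ n for every n ∈ N. -/
/-!
Removing more sentences of `K` only shrinks `(K \ D) ∪ B ∪ U_P`, and `U_P` always stays in, so
supersets of diagnoses within `K` are diagnoses. Hence a diagnosis exists iff `K` itself is one,
i.e. iff `U_P` is a solution KB, which is exactly the stated condition on `B ∪ U_P`.
-/

namespace KBDDiag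

/-- A diagnosis problem instance (DPI) `⟨K,B,P,N⟩_R` over a Tarskian logic on sentences `L`. -/
structure DPI (L : Type*) where
  /-- the entailment relation of the logic -/
  entails : Set L → L → Prop
  /-- entailment is monotonic -/
  entails_mono : ∀ (X Y : Set L) (α : L), entails X α → entails (X ∪ Y) α
  /-- entailment is idempotent -/
  entails_idem : ∀ (X A : Set L) (β : L),
    (∀ α ∈ A, entails X α) → entails (X ∪ A) β → entails X β
  /-- entailment is extensive -/
  entails_ext : ∀ (X : Set L) (α : L), α ∈ X → entails X α
  /-- the (possibly faulty) KB -/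
  K : Set L
  /-- the background KB -/
  B : Set L
  /-- the positive test cases -/
  P : Set (Set L)
  /-- the negative test cases -/
  N : Set (Set L)
  /-- requirements: `r X` means the KB `X` satisfies requirement `r` -/
  R : Set (Set L → Prop)
  K_finite : K.Finite
  B_finite : B.Finite
  K_B_disjoint : K ∩ B = ∅
  P_finite : P.Finite
  P_mem_finite : ∀ p ∈ P, Set.Finite p
  N_finite : N.Finite
  N_mem_finite : ∀ n ∈ N, Set.Finite n
  /-- violation of a requirement is monotone -/
  viol_mono : ∀ r ∈ R, ∀ X Y : Set L, X ⊆ Y → ¬ r X → ¬ r Y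
  /-- requirements are preserved under adding entailed sentences -/
  sat_entailed : ∀ r ∈ R, ∀ X A : Set L, r X → (∀ α ∈ A, entails X α) → r (X ∪ A)
  /-- the background KB satisfies every requirement -/
  B_sat : ∀ r ∈ R, r B

namespace DPI

variable {L : Type*} (d : DPI L)

/-- `X ⊨ Y` : X entails every sentence of Y. -/
def EntailsAll (X Y : Set L) : Prop := ∀ α ∈ Y, d.entails X α

/-- `U_P`, the union of all positive test cases. -/
def UP : Set L := ⋃₀ d.P

/-- `Ks` is a solution KB w.r.t. the DPI. -/
def IsSolutionKB (Ks : Set L) : Prop :=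
  (∀ r ∈ d.R, r (Ks ∪ d.B)) ∧
  (∀ p ∈ d.P, d.EntailsAll (Ks ∪ d.B) p) ∧
  (∀ n ∈ d.N, ¬ d.EntailsAll (Ks ∪ d.B) n)

/-- `D` is a diagnosis w.r.t. the DPI. -/
def IsDiagnosis (D : Set L) : Prop :=
  D ⊆ d.K ∧ d.IsSolutionKB ((d.K \ D) ∪ d.UP)

/-- `D` is a minimal diagnosis w.r.t. the DPI. -/
def IsMinDiagnosis (D : Set L) : Prop :=
  d.IsDiagnosis D ∧ ∀ D' ⊂ D, ¬ d.IsDiagnosis D'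

/-- `C` is a conflict w.r.t. the DPI. -/
def IsConflict (C : Set L) : Prop :=
  C ⊆ d.K ∧ ¬ d.IsSolutionKB (C ∪ d.UP)

/-- `C` is a minimal conflict w.r.t. the DPI. -/
def IsMinConflict (C : Set L) : Prop :=
  d.IsConflict C ∧ ∀ C' ⊂ C, ¬ d.IsConflict C'

/-- `Ks` is a maximal solution KB w.r.t. the DPI. -/
def IsMaxSolutionKB (Ks : Set L) : Prop :=
  d.IsSolutionKB Ks ∧ ¬ ∃ K' : Set L, d.IsSolutionKB K' ∧ Ks ∩ d.K ⊂ K' ∩ d.K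

/-- `K*_i = (K \ D_i) ∪ B ∪ U_P`. -/
def Kstar (Di : Set L) : Set L := (d.K \ Di) ∪ d.B ∪ d.UP

/-- `X` violates some requirement in `R` or entails some negative test case. -/
def Violates (X : Set L) : Prop :=
  (∃ r ∈ d.R, ¬ r X) ∨ (∃ n ∈ d.N, d.EntailsAll X n)

/-- `dx(X)` w.r.t. the leading diagnoses `Ds`. -/
def dxS (Ds : Set (Set L)) (X : Set L) : Set (Set L) :=
  {Di ∈ Ds | d.EntailsAll (d.Kstar Di) X}

/-- `dnx(X)` w.r.t. the leading diagnoses `Ds`. -/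
def dnxS (Ds : Set (Set L)) (X : Set L) : Set (Set L) :=
  {Di ∈ Ds | d.Violates (d.Kstar Di ∪ X)}

/-- `dz(X)` w.r.t. the leading diagnoses `Ds`. -/
def dzS (Ds : Set (Set L)) (X : Set L) : Set (Set L) :=
  Ds \ (d.dxS Ds X ∪ d.dnxS Ds X)

/-- `Q` is a query w.r.t. the leading diagnoses `Ds`. -/
def IsQuery (Ds : Set (Set L)) (Q : Set L) : Prop :=
  Q.Nonempty ∧ (d.dxS Ds Q).Nonempty ∧ (d.dnxS Ds Q).Nonempty

/-- The canonical query `Q_can(S) = (K \ U_S) ∩ (U_D \ I_D)` w.r.t. the seed `S`. -/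
def Qcan (Ds S : Set (Set L)) : Set L := (d.K \ ⋃₀ S) ∩ (⋃₀ Ds \ ⋂₀ Ds)

/-- `⟨dxp, dnxp, ∅⟩` is a canonical q-partition of `Ds`. -/
def IsCanonicalQPartition (Ds dxp dnxp : Set (Set L)) : Prop :=
  dxp ∪ dnxp = Ds ∧ dxp ∩ dnxp = ∅ ∧
  dxp.Nonempty ∧ dxp ⊂ Ds ∧
  (d.Qcan Ds dxp).Nonempty ∧
  d.dxS Ds (d.Qcan Ds dxp) = dxp ∧
  d.dnxS Ds (d.Qcan Ds dxp) = dnxp ∧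
  d.dzS Ds (d.Qcan Ds dxp) = ∅

end DPI

/-- `Disc_D = U_D \ I_D`, the discrimination sentences w.r.t. `Ds`. -/
def Disc {L : Type*} (Ds : Set (Set L)) : Set L := ⋃₀ Ds \ ⋂₀ Ds

/-- `H` is a hitting set of the collection `S`. -/
def IsHittingSet {α : Type*} (S : Set (Set α)) (H : Set α) : Prop :=
  H ⊆ ⋃₀ S ∧ ∀ s ∈ S, (H ∩ s).Nonempty

/-- `H` is a minimal hitting set of the collection `S`. -/
def IsMinHittingSet {α : Type*} (S : Set (Set α)) (H : Set α) : Prop :=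
  IsHittingSet S H ∧ ∀ H' ⊂ H, ¬ IsHittingSet S H'

/-- `MHS S`, the set of all minimal hitting sets of `S`. -/
def MHS {α : Type*} (S : Set (Set α)) : Set (Set α) :=
  {H | IsMinHittingSet S H}

namespace DPI

variable {L : Type*} (d : DPI L)

theorem entails_of_subset {X Y : Set L} {α : L} (hXY : X ⊆ Y) (h : d.entails X α) :
    d.entails Y α := by
  simpa only [Set.union_eq_self_of_subset_left hXY] using d.entails_mono X Y α h

theorem entailsAll_of_subset {X Y A : Set L} (hXY : X ⊆ Y) (h : d.EntailsAll X A) :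
    d.EntailsAll Y A :=
  fun α hα => d.entails_of_subset hXY (h α hα)

theorem sat_of_subset {r : Set L → Prop} (hr : r ∈ d.R) {X Y : Set L} (hXY : X ⊆ Y)
    (hY : r Y) : r X := by
  by_contra hX
  exact d.viol_mono r hr X Y hXY hX hY

theorem entailsAll_P_of_UP_subset {X : Set L} (hX : d.UP ⊆ X) :
    ∀ p ∈ d.P, d.EntailsAll (X ∪ d.B) p :=
  fun p hp α hα => d.entails_ext _ α (Or.inl (hX ⟨p, hp, hα⟩))

theorem IsSolutionKB.of_subset {X Y : Set L} (hY : d.IsSolutionKB Y) (hXY : X ⊆ Y)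
    (hUP : d.UP ⊆ X) : d.IsSolutionKB X := by
  obtain ⟨hR, -, hN⟩ := hY
  have hXB : X ∪ d.B ⊆ Y ∪ d.B := Set.union_subset_union_left _ hXY
  exact ⟨fun r hr => d.sat_of_subset hr hXB (hR r hr), d.entailsAll_P_of_UP_subset hUP,
    fun n hn hX => hN n hn (d.entailsAll_of_subset hXB hX)⟩

theorem IsDiagnosis.superset {D D' : Set L} (hD : d.IsDiagnosis D) (hDD' : D ⊆ D')
    (hD'K : D' ⊆ d.K) : d.IsDiagnosis D' :=
  ⟨hD'K, hD.2.of_subset d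
    (Set.union_subset_union_left _ (Set.sdiff_subset_sdiff_right hDD')) Set.subset_union_right⟩

theorem isDiagnosis_K_iff :
    d.IsDiagnosis d.K ↔
      (∀ r ∈ d.R, r (d.B ∪ d.UP)) ∧ ∀ n ∈ d.N, ¬ d.EntailsAll (d.B ∪ d.UP) n := by
  have hKB : (d.K \ d.K ∪ d.UP) ∪ d.B = d.B ∪ d.UP := by
    rw [Set.sdiff_self, Set.empty_union, Set.union_comm]
  simp only [IsDiagnosis, IsSolutionKB, hKB, subset_rfl, true_and]
  have hP : ∀ p ∈ d.P, d.EntailsAll (d.B ∪ d.UP) p := by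
    simpa only [Set.union_comm] using d.entailsAll_P_of_UP_subset (subset_refl d.UP)
  exact ⟨fun ⟨hR, _, hN⟩ => ⟨hR, hN⟩, fun ⟨hR, hN⟩ => ⟨hR, hP, hN⟩⟩

end DPI

/-- A diagnosis exists iff `B ∪ U_P` satisfies every requirement and
entails no negative test case. -/
theorem statement2 {L : Type*} (d : DPI L) :
    (∃ D : Set L, d.IsDiagnosis D) ↔
      ((∀ r ∈ d.R, r (d.B ∪ d.UP)) ∧ ∀ n ∈ d.N, ¬ d.EntailsAll (d.B ∪ d.UP) n) :=
  ⟨fun ⟨_, hD⟩ => d.isDiagnosis_K_iff.mp (hD.superset d hD.1 subset_rfl),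
    fun h => ⟨d.K, d.isDiagnosis_K_iff.mpr h⟩⟩

end KBDDiag
end

section
/- Let ⟨K,B,P,N⟩_R be a DPI, D a set of minimal diagnoses w.r.t. it, and P = ⟨dx, dnx, ∅⟩ a partition of D with dx ≠ ∅ and dnx ≠ ∅. Then P is a canonical q-partition if and only if (1) U_dx ⊊ U_D and (2) there is no D_j ∈ dnx such that D_j ⊆ U_dx. -/
namespace KBDDiag

/-
Write `Q = Q_can(dx)`. Since `Q ⊆ K` and every leading diagnosis `Dᵢ` is minimal, `K*ᵢ ∪ Q` is
faulty exactly when `Q` meets `Dᵢ`, and `Dᵢ ∩ Q = Dᵢ \ U_dx` because `dx ≠ ∅`. When `Q` misses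
`Dᵢ` it lies in `K \ Dᵢ ⊆ K*ᵢ`, so `K*ᵢ ⊨ Q`. Hence the q-partition of `Q` always puts `Dᵢ` into
`dx(Q)` or `dnx(Q)` according as `Dᵢ ⊆ U_dx` or not, and it reproduces `⟨dx, dnx, ∅⟩` exactly
when no `Dⱼ ∈ dnx` is covered by `U_dx`; condition (1) then follows because `dnx ≠ ∅`.
-/

namespace DPI

variable {L : Type*} {d : DPI L}

theorem Kstar_eq_union_B (Di : Set L) : d.Kstar Di = ((d.K \ Di) ∪ d.UP) ∪ d.B :=
  Set.union_right_comm _ _ _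

theorem IsDiagnosis.not_violates_Kstar {Di : Set L} (h : d.IsDiagnosis Di) :
    ¬ d.Violates (d.Kstar Di) := by
  obtain ⟨-, hR, -, hN⟩ := h
  rw [Kstar_eq_union_B]
  rintro (⟨r, hr, hnr⟩ | ⟨n, hn, hent⟩)
  · exact hnr (hR r hr)
  · exact hN n hn hent

theorem violates_Kstar_of_not_isDiagnosis {D : Set L} (hD : D ⊆ d.K) (h : ¬ d.IsDiagnosis D) :
    d.Violates (d.Kstar D) := by
  by_contra hv
  simp only [Violates, Kstar_eq_union_B, not_or, not_exists, not_and, not_not] at hv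
  refine h ⟨hD, fun r hr => hv.1 r hr, fun p hp α hα => ?_, hv.2⟩
  exact d.entails_ext _ α (Or.inl (Or.inr ⟨p, hp, hα⟩))

theorem Kstar_union_of_subset_K (Di : Set L) {Q : Set L} (hQ : Q ⊆ d.K) :
    d.Kstar Di ∪ Q = d.Kstar (Di \ Q) := by
  ext x
  simp only [Kstar, Set.mem_union, Set.mem_sdiff]
  have := @hQ x
  tauto

theorem IsMinDiagnosis.violates_Kstar_union_iff {Di Q : Set L} (hmin : d.IsMinDiagnosis Di)
    (hQ : Q ⊆ d.K) : d.Violates (d.Kstar Di ∪ Q) ↔ (Di ∩ Q).Nonempty := by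
  constructor
  · intro hv
    by_contra hmiss
    have hQK : Q ⊆ d.Kstar Di := fun x hx =>
      Or.inl (Or.inl ⟨hQ hx, fun hxD => hmiss ⟨x, hxD, hx⟩⟩)
    rw [Set.union_eq_self_of_subset_right hQK] at hv
    exact hmin.1.not_violates_Kstar hv
  · rintro ⟨x, hxD, hxQ⟩
    have hlt : Di \ Q ⊂ Di := Set.sdiff_ssubset_left_iff.mpr ⟨x, hxD, hxQ⟩
    rw [Kstar_union_of_subset_K Di hQ]
    exact violates_Kstar_of_not_isDiagnosis (Set.sdiff_subset.trans hmin.1.1) (hmin.2 _ hlt)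

theorem not_violates_union_of_entailsAll {X Q : Set L} (hX : ¬ d.Violates X)
    (hent : d.EntailsAll X Q) : ¬ d.Violates (X ∪ Q) := by
  rintro (⟨r, hr, hnr⟩ | ⟨n, hn, hentn⟩)
  · exact hX (Or.inl ⟨r, hr, fun hrX => hnr (d.sat_entailed r hr X Q hrX hent)⟩)
  · exact hX (Or.inr ⟨n, hn, fun β hβ => d.entails_idem X Q β hent (hentn β hβ)⟩)

section Qcan

variable {Ds S : Set (Set L)}

theorem Qcan_subset_K : d.Qcan Ds S ⊆ d.K := fun _ hx => hx.1.1

theorem inter_Qcan_eq_diff_sUnion {Di : Set L} (hDi : Di ∈ Ds) (hDiK : Di ⊆ d.K)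
    (hS : S.Nonempty) (hSDs : S ⊆ Ds) : Di ∩ d.Qcan Ds S = Di \ ⋃₀ S := by
  obtain ⟨D₀, hD₀⟩ := hS
  ext x
  simp only [Qcan, Set.mem_inter_iff, Set.mem_sdiff, Set.mem_sUnion, Set.mem_sInter]
  constructor
  · rintro ⟨hxD, ⟨-, hxS⟩, -⟩
    exact ⟨hxD, hxS⟩
  · rintro ⟨hxD, hxS⟩
    exact ⟨hxD, ⟨hDiK hxD, hxS⟩, ⟨Di, hDi, hxD⟩,
      fun hall => hxS ⟨D₀, hD₀, hall D₀ (hSDs hD₀)⟩⟩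

variable (hDs : ∀ Di ∈ Ds, d.IsMinDiagnosis Di) (hS : S.Nonempty) (hSDs : S ⊆ Ds)
include hDs hS hSDs

theorem mem_dnxS_Qcan_iff {Di : Set L} :
    Di ∈ d.dnxS Ds (d.Qcan Ds S) ↔ Di ∈ Ds ∧ ¬ Di ⊆ ⋃₀ S := by
  refine and_congr_right fun hDi => ?_
  rw [(hDs Di hDi).violates_Kstar_union_iff Qcan_subset_K,
    inter_Qcan_eq_diff_sUnion hDi (hDs Di hDi).1.1 hS hSDs, Set.sdiff_nonempty]

theorem mem_dxS_Qcan_iff {Di : Set L} :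
    Di ∈ d.dxS Ds (d.Qcan Ds S) ↔ Di ∈ Ds ∧ Di ⊆ ⋃₀ S := by
  refine and_congr_right fun hDi => ⟨fun hent => ?_, fun hcov α hα => ?_⟩
  · by_contra hncov
    have hv := (mem_dnxS_Qcan_iff hDs hS hSDs).2 ⟨hDi, hncov⟩
    exact not_violates_union_of_entailsAll (hDs Di hDi).1.not_violates_Kstar hent hv.2
  · exact d.entails_ext _ α (Or.inl (Or.inl ⟨hα.1.1, fun hαD => hα.1.2 (hcov hαD)⟩))

theorem dzS_Qcan_eq_empty : d.dzS Ds (d.Qcan Ds S) = ∅ := by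
  refine Set.sdiff_eq_empty.2 fun Di hDi => ?_
  by_cases hcov : Di ⊆ ⋃₀ S
  · exact Or.inl ((mem_dxS_Qcan_iff hDs hS hSDs).2 ⟨hDi, hcov⟩)
  · exact Or.inr ((mem_dnxS_Qcan_iff hDs hS hSDs).2 ⟨hDi, hcov⟩)

end Qcan

end DPI

section Partition

variable {α : Type*} {Ds dx dnx : Set (Set α)}

theorem sep_subset_sUnion_eq_of_partition (hpart : dx ∪ dnx = Ds)
    (hsep : ∀ D ∈ dnx, ¬ D ⊆ ⋃₀ dx) : {D ∈ Ds | D ⊆ ⋃₀ dx} = dx := by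
  ext D
  simp only [← hpart, Set.mem_ofPred_eq, Set.mem_union]
  exact ⟨fun ⟨hD, hcov⟩ => hD.resolve_right fun hDn => hsep D hDn hcov,
    fun hD => ⟨Or.inl hD, Set.subset_sUnion_of_mem hD⟩⟩

theorem sep_not_subset_sUnion_eq_of_partition (hpart : dx ∪ dnx = Ds)
    (hsep : ∀ D ∈ dnx, ¬ D ⊆ ⋃₀ dx) : {D ∈ Ds | ¬ D ⊆ ⋃₀ dx} = dnx := by
  ext D
  simp only [← hpart, Set.mem_ofPred_eq, Set.mem_union]
  refine ⟨fun ⟨hD, hncov⟩ => hD.resolve_left fun hDx => hncov (Set.subset_sUnion_of_mem hDx),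
    fun hD => ⟨Or.inr hD, hsep D hD⟩⟩

theorem sUnion_ssubset_of_partition (hpart : dx ∪ dnx = Ds) {D : Set α} (hD : D ∈ dnx)
    (hncov : ¬ D ⊆ ⋃₀ dx) : ⋃₀ dx ⊂ ⋃₀ Ds := by
  obtain ⟨x, hxD, hxU⟩ := Set.not_subset.1 hncov
  rw [← hpart, Set.sUnion_union]
  exact Set.ssubset_union_left_iff.2 fun hsub => hxU (hsub ⟨D, hD, hxD⟩)

end Partition

/-- A partition `⟨dxp, dnxp, ∅⟩` of `Ds` with `dxp ≠ ∅ ≠ dnxp` is a canonical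
q-partition iff `U_dxp ⊊ U_Ds` and no `Dj ∈ dnxp` satisfies `Dj ⊆ U_dxp`. -/
theorem statement12 {L : Type*} (d : DPI L) (Ds : Set (Set L))
    (hDs : ∀ Di ∈ Ds, d.IsMinDiagnosis Di)
    (dxp dnxp : Set (Set L))
    (hpart : dxp ∪ dnxp = Ds) (hdisj : dxp ∩ dnxp = ∅)
    (hne1 : dxp.Nonempty) (hne2 : dnxp.Nonempty) :
    d.IsCanonicalQPartition Ds dxp dnxp ↔
      (⋃₀ dxp ⊂ ⋃₀ Ds ∧ ¬ ∃ Dj ∈ dnxp, Dj ⊆ ⋃₀ dxp) := by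
  have hdxDs : dxp ⊆ Ds := hpart ▸ Set.subset_union_left
  have hdnxDs : dnxp ⊆ Ds := hpart ▸ Set.subset_union_right
  obtain ⟨Dj, hDj⟩ := hne2
  constructor
  · rintro ⟨-, -, -, -, -, -, hdnx, -⟩
    have hsep : ∀ D ∈ dnxp, ¬ D ⊆ ⋃₀ dxp := fun D hD =>
      ((DPI.mem_dnxS_Qcan_iff hDs hne1 hdxDs).1 (hdnx ▸ hD)).2
    exact ⟨sUnion_ssubset_of_partition hpart hDj (hsep Dj hDj),
      fun ⟨D, hD, hcov⟩ => hsep D hD hcov⟩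
  · rintro ⟨-, hsep⟩
    push Not at hsep
    have hdx : d.dxS Ds (d.Qcan Ds dxp) = dxp := by
      exact (Set.ext fun _ => DPI.mem_dxS_Qcan_iff hDs hne1 hdxDs).trans
        (sep_subset_sUnion_eq_of_partition hpart hsep)
    have hdnx : d.dnxS Ds (d.Qcan Ds dxp) = dnxp := by
      exact (Set.ext fun _ => DPI.mem_dnxS_Qcan_iff hDs hne1 hdxDs).trans
        (sep_not_subset_sUnion_eq_of_partition hpart hsep)
    have hQ : (d.Qcan Ds dxp).Nonempty := by
      obtain ⟨x, hx⟩ := Set.sdiff_nonempty.2 (hsep Dj hDj)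
      have hDjDs := hdnxDs hDj
      rw [← DPI.inter_Qcan_eq_diff_sUnion hDjDs (hDs Dj hDjDs).1.1 hne1 hdxDs] at hx
      exact ⟨x, hx.2⟩
    refine ⟨hpart, hdisj, hne1, ?_, hQ, hdx, hdnx, DPI.dzS_Qcan_eq_empty hDs hne1 hdxDs⟩
    rw [← hpart]
    exact Set.ssubset_union_left_iff.2 fun hsub => hdisj.subset ⟨hsub hDj, hDj⟩

end KBDDiag
end

section
/- Let ⟨K,B,P,N⟩_R be a DPI, D a set of minimal diagnoses w.r.t. it, and P_k = ⟨dx_k, dnx_k, ∅⟩ a canonical q-partition of D. (Soundness:) Suppose D' ∈ dnx_k, set dx_y := dx_k ∪ {D'}, and assume U_{dx_y} ⊊ U_D and U_{dx_y} is ⊆-minimal in the family {U_{dx_k ∪ {D''}} : D'' ∈ dnx_k}; define dx_s := {D_i ∈ D : D_i \ U_{dx_y} = ∅}, dnx_s := {D_i ∈ D : D_i \ U_{dx_y} ≠ ∅}, and P_s := ⟨dx_s, dnx_s, ∅⟩. Then P_k ↦ P_s is a minimal dx-transformation. (Completeness:) Conversely, every partition P_s of D such that P_k ↦ P_s is a minimal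 dx-transformation arises in this way, i.e., there exists D' ∈ dnx_k such that dx_y := dx_k ∪ {D'} satisfies U_{dx_y} ⊊ U_D, U_{dx_y} is ⊆-minimal in {U_{dx_k ∪ {D''}} : D'' ∈ dnx_k}, and dx_s = {D_i ∈ D : D_i \ U_{dx_y} = ∅} and dnx_s = {D_i ∈ D : D_i \ U_{dx_y} ≠ ∅}. -/
/-!
For minimal diagnoses, the canonical query of a seed `S` sorts each `D_i` by whether
`D_i ⊆ U_S`: if so, `K*_i` contains the query; if not, the query contains some `α ∈ D_i`, and
adding `α` to `K*_i` yields (a superset of) the KB of the non-diagnosis `D_i \ {α}`. Hence the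
canonical q-partitions are exactly the families `dx` that are closed, `dx = {D | D ⊆ U_dx}`, with
`U_dx ⊊ U_D`. Every closed family strictly above `dx_k` contains the closure of some
`dx_k ∪ {D'}`, whose union is `U_{dx_k ∪ {D'}}`; so the minimal ones are precisely the closures of
the extensions with `⊆`-minimal union.
-/

namespace KBDDiag

/-- `P_i ↦ P_j` is a minimal dx-transformation (of partitions of `Ds`). -/
def DPI.IsMinimalDxTransf {L : Type*} (d : DPI L) (Ds dxi dxj dnxj : Set (Set L)) : Prop :=
  d.IsCanonicalQPartition Ds dxj dnxj ∧ dxi ⊂ dxj ∧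
  ¬ ∃ dx' dnx' : Set (Set L), d.IsCanonicalQPartition Ds dx' dnx' ∧ dxi ⊂ dx' ∧ dx' ⊂ dxj


section SetFamily

variable {α : Type*} {Ds T dx : Set (Set α)}

theorem sUnion_sep_subset (Ds : Set (Set α)) (W : Set α) : ⋃₀ {D ∈ Ds | D ⊆ W} ⊆ W :=
  Set.sUnion_subset fun _ hD => hD.2

theorem subset_sep_subset_sUnion (hT : T ⊆ Ds) : T ⊆ {D ∈ Ds | D ⊆ ⋃₀ T} :=
  fun _ hD => ⟨hT hD, Set.subset_sUnion_of_mem hD⟩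

theorem sUnion_sep_subset_sUnion (hT : T ⊆ Ds) : ⋃₀ {D ∈ Ds | D ⊆ ⋃₀ T} = ⋃₀ T :=
  (sUnion_sep_subset Ds _).antisymm (Set.sUnion_mono (subset_sep_subset_sUnion hT))

theorem subset_sUnion_sep_iff {W D : Set α} (hD : D ∈ Ds) :
    D ⊆ ⋃₀ {D ∈ Ds | D ⊆ W} ↔ D ⊆ W :=
  ⟨fun h => h.trans (sUnion_sep_subset Ds W), fun h => Set.subset_sUnion_of_mem ⟨hD, h⟩⟩

theorem ssubset_sep_subset_sUnion_insert {D' : Set α} (hT : T ⊆ Ds) (hD' : D' ∈ Ds \ T) :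
    T ⊂ {D ∈ Ds | D ⊆ ⋃₀ (T ∪ {D'})} := by
  have hsub : T ∪ {D'} ⊆ {D ∈ Ds | D ⊆ ⋃₀ (T ∪ {D'})} :=
    subset_sep_subset_sUnion (Set.union_subset hT (Set.singleton_subset_iff.mpr hD'.1))
  exact (Set.ssubset_iff_of_subset (Set.subset_union_left.trans hsub)).mpr
    ⟨D', hsub (Or.inr rfl), hD'.2⟩

theorem sep_subset_sUnion_subset (hdx : dx = {D ∈ Ds | D ⊆ ⋃₀ dx}) (hT : T ⊆ dx) :
    {D ∈ Ds | D ⊆ ⋃₀ T} ⊆ dx := by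
  rw [hdx]
  exact fun _ hD => ⟨hD.1, hD.2.trans (Set.sUnion_mono hT)⟩

end SetFamily

namespace DPI

variable {L : Type*} {d : DPI L} {Ds S : Set (Set L)} {Di X : Set L}

theorem Violates.mono {Y : Set L} (h : d.Violates X) (hXY : X ⊆ Y) : d.Violates Y := by
  rcases h with ⟨r, hr, hX⟩ | ⟨n, hn, hX⟩
  · exact Or.inl ⟨r, hr, d.viol_mono r hr X Y hXY hX⟩
  · refine Or.inr ⟨n, hn, fun α hα => ?_⟩
    simpa [Set.union_eq_self_of_subset_left hXY] using d.entails_mono X Y α (hX α hα)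

theorem entailsAll_kstar_of_subset (hX : X ⊆ d.K \ Di) : d.EntailsAll (d.Kstar Di) X :=
  fun α hα => d.entails_ext _ α (Or.inl (Or.inl (hX hα)))

theorem IsDiagnosis.not_violates_kstar_union (hD : d.IsDiagnosis Di)
    (hX : d.EntailsAll (d.Kstar Di) X) : ¬ d.Violates (d.Kstar Di ∪ X) := by
  obtain ⟨hreq, -, hneg⟩ := hD.2
  rw [Set.union_right_comm] at hreq hneg
  rintro (⟨r, hr, hviol⟩ | ⟨n, hn, hent⟩)
  · exact hviol (d.sat_entailed r hr _ _ (hreq r hr) hX)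
  · exact hneg n hn fun β hβ => d.entails_idem _ _ β hX (hent β hβ)

theorem IsMinDiagnosis.violates_insert_kstar (hD : d.IsMinDiagnosis Di) {α : L} (hα : α ∈ Di) :
    d.Violates (insert α (d.Kstar Di)) := by
  have hnot : ¬ d.IsDiagnosis (Di \ {α}) := hD.2 _ (Set.sdiff_singleton_ssubset.mpr hα)
  have hviol : d.Violates ((d.K \ (Di \ {α})) ∪ d.UP ∪ d.B) := by
    by_contra h
    simp only [Violates, not_or, not_exists, not_and, not_not] at h
    exact hnot ⟨fun x hx => hD.1.1 hx.1, h.1,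
      fun p hp β hβ => d.entails_ext _ β (Or.inl (Or.inr ⟨p, hp, hβ⟩)), h.2⟩
  refine hviol.mono fun x hx => ?_
  simp only [Kstar, Set.mem_insert_iff, Set.mem_union, Set.mem_sdiff,
    Set.mem_singleton_iff] at hx ⊢
  tauto

theorem mem_qcan (hK : ∀ D ∈ Ds, D ⊆ d.K) (hS : S.Nonempty) (hSDs : S ⊆ Ds)
    (hDi : Di ∈ Ds) {α : L} (hα : α ∈ Di) (hαS : α ∉ ⋃₀ S) : α ∈ d.Qcan Ds S := by
  obtain ⟨D₀, hD₀⟩ := hS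
  exact ⟨⟨hK Di hDi hα, hαS⟩, ⟨Di, hDi, hα⟩, fun h => hαS ⟨D₀, hD₀, h D₀ (hSDs hD₀)⟩⟩

theorem violates_kstar_union_qcan (hDs : ∀ Di ∈ Ds, d.IsMinDiagnosis Di) (hS : S.Nonempty)
    (hSDs : S ⊆ Ds) (hDi : Di ∈ Ds) (h : ¬ Di ⊆ ⋃₀ S) :
    d.Violates (d.Kstar Di ∪ d.Qcan Ds S) := by
  obtain ⟨α, hα, hαS⟩ := Set.not_subset.mp h
  have hαQ := mem_qcan (fun D hD => (hDs D hD).1.1) hS hSDs hDi hα hαS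
  exact ((hDs Di hDi).violates_insert_kstar hα).mono
    (Set.insert_subset (Or.inr hαQ) Set.subset_union_left)

theorem entailsAll_kstar_qcan_iff (hDs : ∀ Di ∈ Ds, d.IsMinDiagnosis Di) (hS : S.Nonempty)
    (hSDs : S ⊆ Ds) (hDi : Di ∈ Ds) :
    d.EntailsAll (d.Kstar Di) (d.Qcan Ds S) ↔ Di ⊆ ⋃₀ S := by
  refine ⟨fun hE => by_contra fun h => ?_, fun h => ?_⟩
  · exact (hDs Di hDi).1.not_violates_kstar_union hE
      (violates_kstar_union_qcan hDs hS hSDs hDi h)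
  · exact entailsAll_kstar_of_subset fun α hα => ⟨hα.1.1, fun hαD => hα.1.2 (h hαD)⟩

theorem violates_kstar_union_qcan_iff (hDs : ∀ Di ∈ Ds, d.IsMinDiagnosis Di)
    (hS : S.Nonempty) (hSDs : S ⊆ Ds) (hDi : Di ∈ Ds) :
    d.Violates (d.Kstar Di ∪ d.Qcan Ds S) ↔ ¬ Di ⊆ ⋃₀ S := by
  refine ⟨fun hV h => ?_, violates_kstar_union_qcan hDs hS hSDs hDi⟩
  exact (hDs Di hDi).1.not_violates_kstar_union
    ((entailsAll_kstar_qcan_iff hDs hS hSDs hDi).mpr h) hV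

theorem dxS_qcan (hDs : ∀ Di ∈ Ds, d.IsMinDiagnosis Di) (hS : S.Nonempty) (hSDs : S ⊆ Ds) :
    d.dxS Ds (d.Qcan Ds S) = {D ∈ Ds | D ⊆ ⋃₀ S} :=
  Set.sep_ext_iff.mpr fun _ hD => entailsAll_kstar_qcan_iff hDs hS hSDs hD

theorem dnxS_qcan (hDs : ∀ Di ∈ Ds, d.IsMinDiagnosis Di) (hS : S.Nonempty) (hSDs : S ⊆ Ds) :
    d.dnxS Ds (d.Qcan Ds S) = {D ∈ Ds | ¬ D ⊆ ⋃₀ S} :=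
  Set.sep_ext_iff.mpr fun _ hD => violates_kstar_union_qcan_iff hDs hS hSDs hD

theorem dzS_qcan (hDs : ∀ Di ∈ Ds, d.IsMinDiagnosis Di) (hS : S.Nonempty) (hSDs : S ⊆ Ds) :
    d.dzS Ds (d.Qcan Ds S) = ∅ := by
  rw [dzS, dxS_qcan hDs hS hSDs, dnxS_qcan hDs hS hSDs, Set.sdiff_eq_empty]
  intro D hD
  by_cases h : D ⊆ ⋃₀ S
  exacts [Or.inl ⟨hD, h⟩, Or.inr ⟨hD, h⟩]

theorem isCanonicalQPartition_iff (hDs : ∀ Di ∈ Ds, d.IsMinDiagnosis Di) {dx dnx : Set (Set L)} :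
    d.IsCanonicalQPartition Ds dx dnx ↔
      dx.Nonempty ∧ ⋃₀ dx ⊂ ⋃₀ Ds ∧ dx = {D ∈ Ds | D ⊆ ⋃₀ dx} ∧
        dnx = {D ∈ Ds | ¬ D ⊆ ⋃₀ dx} := by
  constructor
  · rintro ⟨-, -, hne, hss, ⟨x, hxK, hxU, -⟩, hdx, hdnx, -⟩
    rw [dxS_qcan hDs hne hss.subset] at hdx
    rw [dnxS_qcan hDs hne hss.subset] at hdnx
    exact ⟨hne, (Set.ssubset_iff_of_subset (Set.sUnion_mono hss.subset)).mpr ⟨x, hxU, hxK.2⟩,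
      hdx.symm, hdnx.symm⟩
  · rintro ⟨hne, hU, hdx, hdnx⟩
    have hsub : dx ⊆ Ds := fun D hD => (hdx.subset hD).1
    obtain ⟨x, ⟨Dj, hDj, hxDj⟩, hx⟩ := Set.exists_of_ssubset hU
    refine ⟨?_, ?_, hne, ?_, ⟨x, mem_qcan (fun D hD => (hDs D hD).1.1) hne hsub hDj hxDj hx⟩,
      by rw [dxS_qcan hDs hne hsub, ← hdx], by rw [dnxS_qcan hDs hne hsub, ← hdnx],
      dzS_qcan hDs hne hsub⟩
    · set W := ⋃₀ dx
      rw [hdx, hdnx]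
      ext D
      simp only [Set.mem_union, Set.mem_ofPred_eq]
      tauto
    · set W := ⋃₀ dx
      rw [hdx, hdnx, Set.eq_empty_iff_forall_notMem]
      exact fun D hD => hD.2.2 hD.1.2
    · exact (Set.ssubset_iff_of_subset hsub).mpr ⟨Dj, hDj, fun h => hx ⟨Dj, h, hxDj⟩⟩

theorem isCanonicalQPartition_sep_subset (hDs : ∀ Di ∈ Ds, d.IsMinDiagnosis Di) {W : Set L}
    (hne : {D ∈ Ds | D ⊆ W}.Nonempty) (hW : ¬ ⋃₀ Ds ⊆ W) :
    d.IsCanonicalQPartition Ds {D ∈ Ds | D ⊆ W} {D ∈ Ds | ¬ D ⊆ W} := by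
  refine (isCanonicalQPartition_iff hDs).mpr ⟨hne, ?_, ?_, ?_⟩
  · exact (Set.sUnion_mono (Set.sep_subset _ _)).ssubset_of_not_superset
      fun h => hW (h.trans (sUnion_sep_subset Ds W))
  · exact Set.sep_ext_iff.mpr fun _ hD => (subset_sUnion_sep_iff hD).symm
  · exact Set.sep_ext_iff.mpr fun _ hD => (subset_sUnion_sep_iff hD).not.symm

section Transformation

variable {dxk : Set (Set L)} {D' : Set L}

theorem isCanonicalQPartition_sep_subset_sUnion_insert (hDs : ∀ Di ∈ Ds, d.IsMinDiagnosis Di)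
    (hkDs : dxk ⊆ Ds) (hD' : D' ∈ Ds \ dxk) (hU : ¬ ⋃₀ Ds ⊆ ⋃₀ (dxk ∪ {D'})) :
    d.IsCanonicalQPartition Ds {D ∈ Ds | D ⊆ ⋃₀ (dxk ∪ {D'})}
      {D ∈ Ds | ¬ D ⊆ ⋃₀ (dxk ∪ {D'})} ∧
    dxk ⊂ {D ∈ Ds | D ⊆ ⋃₀ (dxk ∪ {D'})} :=
  ⟨isCanonicalQPartition_sep_subset hDs ⟨D', hD'.1, Set.subset_sUnion_of_mem (Or.inr rfl)⟩ hU,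
    ssubset_sep_subset_sUnion_insert hkDs hD'⟩

theorem isMinimalDxTransf_sep_subset_sUnion_insert (hDs : ∀ Di ∈ Ds, d.IsMinDiagnosis Di)
    (hkDs : dxk ⊆ Ds) (hD' : D' ∈ Ds \ dxk) (hU : ⋃₀ (dxk ∪ {D'}) ⊂ ⋃₀ Ds)
    (hmin : ∀ D'' ∈ Ds \ dxk, ¬ ⋃₀ (dxk ∪ {D''}) ⊂ ⋃₀ (dxk ∪ {D'})) :
    d.IsMinimalDxTransf Ds dxk {D ∈ Ds | D ⊆ ⋃₀ (dxk ∪ {D'})}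
      {D ∈ Ds | ¬ D ⊆ ⋃₀ (dxk ∪ {D'})} := by
  obtain ⟨hcanon, hkT⟩ :=
    isCanonicalQPartition_sep_subset_sUnion_insert hDs hkDs hD' hU.not_superset
  refine ⟨hcanon, hkT, ?_⟩
  rintro ⟨dx, dnx, hc, hkdx, hdxT⟩
  obtain ⟨-, -, hdx, -⟩ := (isCanonicalQPartition_iff hDs).mp hc
  obtain ⟨D'', hD''dx, hD''k⟩ := Set.exists_of_ssubset hkdx
  have hinsert : dxk ∪ {D''} ⊆ dx :=
    Set.union_subset hkdx.subset (Set.singleton_subset_iff.mpr hD''dx)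
  -- `dx` squeezes the union of the competitor `D''` below that of `D'`, so by minimality they
  -- agree and `dx` already contains the whole closure of `dxk ∪ {D'}`.
  have hU'' : ⋃₀ (dxk ∪ {D''}) = ⋃₀ (dxk ∪ {D'}) := by
    have hle : ⋃₀ (dxk ∪ {D''}) ⊆ ⋃₀ (dxk ∪ {D'}) :=
      calc ⋃₀ (dxk ∪ {D''}) ⊆ ⋃₀ dx := Set.sUnion_mono hinsert
        _ ⊆ ⋃₀ {D ∈ Ds | D ⊆ ⋃₀ (dxk ∪ {D'})} := Set.sUnion_mono hdxT.subset
        _ ⊆ ⋃₀ (dxk ∪ {D'}) := sUnion_sep_subset _ _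
    by_contra hne
    exact hmin D'' ⟨(hdx.subset hD''dx).1, hD''k⟩ (hle.ssubset_of_ne hne)
  exact hdxT.not_superset (hU'' ▸ sep_subset_sUnion_subset hdx hinsert)

theorem exists_eq_sep_subset_sUnion_insert_of_isMinimalDxTransf
    (hDs : ∀ Di ∈ Ds, d.IsMinDiagnosis Di) (hkDs : dxk ⊆ Ds) {dxs dnxs : Set (Set L)}
    (h : d.IsMinimalDxTransf Ds dxk dxs dnxs) :
    ∃ D' ∈ Ds \ dxk, ⋃₀ (dxk ∪ {D'}) ⊂ ⋃₀ Ds ∧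
      (∀ D'' ∈ Ds \ dxk, ¬ ⋃₀ (dxk ∪ {D''}) ⊂ ⋃₀ (dxk ∪ {D'})) ∧
      dxs = {D ∈ Ds | D ⊆ ⋃₀ (dxk ∪ {D'})} ∧ dnxs = {D ∈ Ds | ¬ D ⊆ ⋃₀ (dxk ∪ {D'})} := by
  obtain ⟨hcs, hks, hnomid⟩ := h
  obtain ⟨-, hsU, hdxs, hdnxs⟩ := (isCanonicalQPartition_iff hDs).mp hcs
  obtain ⟨D', hD's, hD'k⟩ := Set.exists_of_ssubset hks
  have hD' : D' ∈ Ds \ dxk := ⟨(hdxs.subset hD's).1, hD'k⟩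
  have hinsert : dxk ∪ {D'} ⊆ dxs :=
    Set.union_subset hks.subset (Set.singleton_subset_iff.mpr hD's)
  have hU : ⋃₀ (dxk ∪ {D'}) ⊂ ⋃₀ Ds := (Set.sUnion_mono hinsert).trans_ssubset hsU
  have hsUnion : ∀ D ∈ Ds, ⋃₀ {E ∈ Ds | E ⊆ ⋃₀ (dxk ∪ {D})} = ⋃₀ (dxk ∪ {D}) :=
    fun D hD => sUnion_sep_subset_sUnion (Set.union_subset hkDs (Set.singleton_subset_iff.mpr hD))
  have hdxs_eq : dxs = {D ∈ Ds | D ⊆ ⋃₀ (dxk ∪ {D'})} := by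
    obtain ⟨hc, hkT⟩ :=
      isCanonicalQPartition_sep_subset_sUnion_insert hDs hkDs hD' hU.not_superset
    by_contra hne
    exact hnomid
      ⟨_, _, hc, hkT, (sep_subset_sUnion_subset hdxs hinsert).ssubset_of_ne (Ne.symm hne)⟩
  refine ⟨D', hD', hU, fun D'' hD'' hlt => ?_, hdxs_eq, ?_⟩
  · obtain ⟨hc, hkT⟩ := isCanonicalQPartition_sep_subset_sUnion_insert hDs hkDs hD''
      (hlt.trans hU).not_superset
    have hle : {D ∈ Ds | D ⊆ ⋃₀ (dxk ∪ {D''})} ⊆ dxs := by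
      rw [hdxs_eq]
      exact fun D hD => ⟨hD.1, hD.2.trans hlt.subset⟩
    have hne : {D ∈ Ds | D ⊆ ⋃₀ (dxk ∪ {D''})} ≠ dxs := fun heq =>
      hlt.ne (by rw [← hsUnion D'' hD''.1, heq, hdxs_eq, hsUnion D' hD'.1])
    exact hnomid ⟨_, _, hc, hkT, hle.ssubset_of_ne hne⟩
  · rw [hdnxs, hdxs_eq, hsUnion D' hD'.1]

end Transformation

end DPI

/-- Soundness and completeness of the successor construction for minimal
dx-transformations from a canonical q-partition `P_k = ⟨dxk, dnxk, ∅⟩`. -/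
theorem statement14 {L : Type*} (d : DPI L) (Ds : Set (Set L))
    (hDs : ∀ Di ∈ Ds, d.IsMinDiagnosis Di)
    (dxk dnxk : Set (Set L)) (hk : d.IsCanonicalQPartition Ds dxk dnxk) :
    (∀ D' ∈ dnxk,
        ⋃₀ (dxk ∪ {D'}) ⊂ ⋃₀ Ds →
        (∀ D'' ∈ dnxk, ¬ ⋃₀ (dxk ∪ {D''}) ⊂ ⋃₀ (dxk ∪ {D'})) →
        d.IsMinimalDxTransf Ds dxk
          {Di ∈ Ds | Di \ ⋃₀ (dxk ∪ {D'}) = ∅}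
          {Di ∈ Ds | Di \ ⋃₀ (dxk ∪ {D'}) ≠ ∅}) ∧
    (∀ dxs dnxs : Set (Set L),
        d.IsMinimalDxTransf Ds dxk dxs dnxs →
        ∃ D' ∈ dnxk,
          ⋃₀ (dxk ∪ {D'}) ⊂ ⋃₀ Ds ∧
          (∀ D'' ∈ dnxk, ¬ ⋃₀ (dxk ∪ {D''}) ⊂ ⋃₀ (dxk ∪ {D'})) ∧
          dxs = {Di ∈ Ds | Di \ ⋃₀ (dxk ∪ {D'}) = ∅} ∧
          dnxs = {Di ∈ Ds | Di \ ⋃₀ (dxk ∪ {D'}) ≠ ∅}) := by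
  obtain ⟨hunion, hdisj, -⟩ := hk
  have hkDs : dxk ⊆ Ds := hunion ▸ Set.subset_union_left
  obtain rfl : dnxk = Ds \ dxk := by rw [← hunion, Set.union_sdiff_cancel_left hdisj.subset]
  simp only [Set.sdiff_eq_empty, ne_eq]
  exact ⟨fun _ hD' hU hmin => DPI.isMinimalDxTransf_sep_subset_sUnion_insert hDs hkDs hD' hU hmin,
    fun _ _ h => DPI.exists_eq_sep_subset_sUnion_insert_of_isMinimalDxTransf hDs hkDs h⟩

end KBDDiag
end
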